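/- Let X^x be the CIR process dX_t = (a − kX_t)dt + σ√X_t dW_t starting from x ≥ 0, with a ≥ 0, k ∈ ℝ, σ > 0. Then for each m ∈ ℕ the moment function ũ_m(t,x) := E[(X^x_t)^m] is a polynomial of degree ≤ m in x: there exist smooth functions ũ_{j,m} : ℝ₊ → ℝ with ũ_m(t,x) = Σ_{j=0}^m ũ_{j,m}(t) x^j, given recursively by ũ_{m,m}(t) = e^{−kmt} and ũ_{j,m}(t) = e^{−kmt} ∫_0^t (am + σ²m(m−1)/2) e^{kms} ũ_{j,m−1}(s) ds for 0 ≤ j ≤ m−1. -/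

import Mathlib

open scoped NNReal ENNReal Topology

open intervalIntegral

private noncomputable def cirPrim (f : ℝ → ℝ) (t : ℝ) : ℝ := ∫ s in (0:ℝ)..t, f s

private theorem cirPrim_hasDerivAt {f : ℝ → ℝ} (hf : Continuous f) (t : ℝ) :
    HasDerivAt (cirPrim f) (f t) t :=
  integral_hasDerivAt_right (hf.intervalIntegrable 0 t)
    hf.aestronglyMeasurable.stronglyMeasurableAtFilter hf.continuousAt

private theorem cirPrim_contDiff {f : ℝ → ℝ} (hf : ContDiff ℝ (⊤ : ℕ∞) f) :
    ContDiff ℝ (⊤ : ℕ∞) (cirPrim f) := by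
  have hd : deriv (cirPrim f) = f := funext fun t => (cirPrim_hasDerivAt hf.continuous t).deriv
  rw [contDiff_infty_iff_deriv]
  exact ⟨fun t => (cirPrim_hasDerivAt hf.continuous t).differentiableAt, by rw [hd]; exact hf⟩

/-- The coefficient functions. -/
private noncomputable def cirV (a k σ : ℝ) : ℕ → ℕ → ℝ → ℝ
  | j, 0 => fun _ => if j = 0 then 1 else 0
  | j, (m + 1) =>
    if j = m + 1 then fun t => Real.exp (-(k * ((m+1 : ℕ) : ℝ) * t))
    else fun t => Real.exp (-(k * ((m+1 : ℕ) : ℝ) * t)) *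
      ∫ s in (0:ℝ)..t,
        (a * ((m+1 : ℕ) : ℝ) + σ ^ 2 * ((m+1 : ℕ) : ℝ) * (((m+1 : ℕ) : ℝ) - 1) / 2) *
          Real.exp (k * ((m+1 : ℕ) : ℝ) * s) * cirV a k σ j m s

private theorem cirV_contDiff (a k σ : ℝ) : ∀ m j : ℕ, ContDiff ℝ (⊤ : ℕ∞) (cirV a k σ j m) := by
  intro m
  induction m with
  | zero =>
    intro j
    by_cases h : j = 0 <;> simp [cirV, h] <;> exact contDiff_const
  | succ m ih =>
    intro j
    have hexp : ContDiff ℝ (⊤ : ℕ∞) (fun t => Real.exp (-(k * ((m+1 : ℕ) : ℝ) * t))) :=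
      ((contDiff_const.mul contDiff_id).neg).exp
    by_cases h : j = m + 1
    · simpa [cirV, h] using hexp
    · have hint : ContDiff ℝ (⊤ : ℕ∞) (fun s =>
        (a * ((m+1 : ℕ) : ℝ) + σ ^ 2 * ((m+1 : ℕ) : ℝ) * (((m+1 : ℕ) : ℝ) - 1) / 2) *
          Real.exp (k * ((m+1 : ℕ) : ℝ) * s) * cirV a k σ j m s) :=
        ((contDiff_const.mul ((contDiff_const.mul contDiff_id).exp)).mul (ih j))
      have h2 := hexp.mul (cirPrim_contDiff hint)
      simpa [cirV, h, cirPrim] using h2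

/-- The moments `ũ_m(t,x) = E[(X^x_t)^m]` of the CIR process (characterized here via
`ũ_0 ≡ 1`, `ũ_m(0,x) = x^m` and the moment ODE
`∂_t ũ_m = (am + σ²m(m−1)/2) ũ_{m−1} − k m ũ_m`) are polynomials of degree ≤ m in `x`,
with coefficients `ũ_{j,m}` given by `ũ_{m,m}(t) = e^{−kmt}` and
`ũ_{j,m}(t) = e^{−kmt} ∫_0^t (am + σ²m(m−1)/2) e^{kms} ũ_{j,m−1}(s) ds` for `j < m`. -/
theorem stmt_12 (a k σ : ℝ) (ha : 0 ≤ a) (hσ : 0 < σ)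
    (u : ℕ → ℝ → ℝ → ℝ)
    (h0 : ∀ t x : ℝ, u 0 t x = 1)
    (hinit : ∀ m : ℕ, ∀ x : ℝ, 0 ≤ x → u m 0 x = x ^ m)
    (hode : ∀ m : ℕ, 1 ≤ m → ∀ x : ℝ, 0 ≤ x → ∀ t : ℝ, 0 ≤ t →
      HasDerivAt (fun s => u m s x)
        ((a * m + σ ^ 2 * m * (m - 1) / 2) * u (m - 1) t x - k * m * u m t x) t) :
    ∃ v : ℕ → ℕ → ℝ → ℝ,
      (∀ j m : ℕ, ContDiff ℝ (⊤ : ℕ∞) (v j m)) ∧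
      (∀ m : ℕ, ∀ t : ℝ, 0 ≤ t → ∀ x : ℝ, 0 ≤ x →
        u m t x = ∑ j ∈ Finset.range (m + 1), v j m t * x ^ j) ∧
      (∀ m : ℕ, 1 ≤ m → ∀ t : ℝ, v m m t = Real.exp (-(k * m * t))) ∧
      (∀ m : ℕ, 1 ≤ m → ∀ j < m, ∀ t : ℝ,
        v j m t = Real.exp (-(k * m * t)) *
          ∫ s in (0:ℝ)..t,
            (a * m + σ ^ 2 * m * (m - 1) / 2) * Real.exp (k * m * s) * v j (m - 1) s) := by
  classical
  refine ⟨cirV a k σ, fun j m => cirV_contDiff a k σ m j, ?_, ?_, ?_⟩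
  · -- polynomial expansion
    intro m
    induction m with
    | zero =>
      intro t ht x hx
      simp [h0, cirV]
    | succ m ih =>
      intro t ht x hx
      set M : ℝ := ((m+1 : ℕ) : ℝ) with hM
      set c : ℝ := a * M + σ ^ 2 * M * (M - 1) / 2 with hc
      have hIcc : Set.uIcc (0:ℝ) t = Set.Icc 0 t := Set.uIcc_of_le ht
      have hcont : ContinuousOn (fun s => u m s x) (Set.Icc 0 t) := by
        cases m with
        | zero => simpa [h0] using continuousOn_const
        | succ n =>
          exact fun s hs =>
            ((hode (n+1) (by omega) x hx s hs.1).continuousAt).continuousWithinAt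
      have hw : ∀ s ∈ Set.uIcc (0:ℝ) t,
          HasDerivAt (fun s => Real.exp (k * M * s) * u (m+1) s x)
            (c * Real.exp (k * M * s) * u m s x) s := by
        intro s hs
        have hs0 : 0 ≤ s := by rw [hIcc] at hs; exact hs.1
        have h1 : HasDerivAt (fun s => Real.exp (k * M * s))
            (k * M * Real.exp (k * M * s)) s := by
          have h := (((hasDerivAt_id s).const_mul (k * M))).exp
          simp only [id_eq, mul_one] at h
          simpa [mul_comm] using h
        have h2 := hode (m+1) (by omega) x hx s hs0
        have h2' : HasDerivAt (fun s => u (m+1) s x)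
            (c * u m s x - k * M * u (m+1) s x) s := by
          simpa [hM, hc, Nat.succ_sub_one] using h2
        have h3 := h1.mul h2'
        rw [show c * Real.exp (k * M * s) * u m s x = k * M * Real.exp (k * M * s) * u (m+1) s x + Real.exp (k * M * s) * (c * u m s x - k * M * u (m+1) s x) by ring]
        exact h3
      have hint : IntervalIntegrable (fun s => c * Real.exp (k * M * s) * u m s x)
          MeasureTheory.volume 0 t := by
        apply ContinuousOn.intervalIntegrable
        rw [hIcc]
        exact (continuousOn_const.mul
          (Real.continuous_exp.comp (continuous_const.mul continuous_id)).continuousOn).mul hcont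
      have hftc := intervalIntegral.integral_eq_sub_of_hasDerivAt hw hint
      have h0' : u (m+1) 0 x = x ^ (m+1) := hinit (m+1) x hx
      have hu : u (m+1) t x = Real.exp (-(k * M * t)) *
          (x ^ (m+1) + ∫ s in (0:ℝ)..t, c * Real.exp (k * M * s) * u m s x) := by
        rw [hftc, h0', Real.exp_neg]
        simp only [mul_zero, Real.exp_zero, one_mul]
        have hxe : Real.exp (k * M * t) ≠ 0 := Real.exp_ne_zero _
        field_simp
        try ring
      have hcongr : (∫ s in (0:ℝ)..t, c * Real.exp (k * M * s) * u m s x)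
          = ∫ s in (0:ℝ)..t,
              ∑ j ∈ Finset.range (m+1), c * Real.exp (k * M * s) * cirV a k σ j m s * x ^ j := by
        apply intervalIntegral.integral_congr
        intro s hs
        rw [hIcc] at hs
        show c * Real.exp (k * M * s) * u m s x
          = ∑ j ∈ Finset.range (m+1), c * Real.exp (k * M * s) * cirV a k σ j m s * x ^ j
        rw [ih s hs.1 x hx, Finset.mul_sum]
        exact Finset.sum_congr rfl fun j _ => by ring
      have hsum : (∫ s in (0:ℝ)..t,
            ∑ j ∈ Finset.range (m+1), c * Real.exp (k * M * s) * cirV a k σ j m s * x ^ j)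
          = ∑ j ∈ Finset.range (m+1),
              (∫ s in (0:ℝ)..t, c * Real.exp (k * M * s) * cirV a k σ j m s) * x ^ j := by
        rw [intervalIntegral.integral_finset_sum]
        · exact Finset.sum_congr rfl fun j _ => by
            rw [← intervalIntegral.integral_mul_const]
        · intro j _
          apply Continuous.intervalIntegrable
          exact ((continuous_const.mul
            (Real.continuous_exp.comp (continuous_const.mul continuous_id))).mul
            (cirV_contDiff a k σ m j).continuous).mul continuous_const
      have hVtop : cirV a k σ (m+1) (m+1) t = Real.exp (-(k * M * t)) := by
        simp [cirV, hM]
      have hVlow : ∀ j, j < m + 1 → cirV a k σ j (m+1) t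
          = Real.exp (-(k * M * t)) *
            ∫ s in (0:ℝ)..t, c * Real.exp (k * M * s) * cirV a k σ j m s := by
        intro j hj
        simp only [cirV, if_neg (Nat.ne_of_lt hj)]
        rfl
      have hRHS : ∑ j ∈ Finset.range (m+1+1), cirV a k σ j (m+1) t * x ^ j
          = Real.exp (-(k * M * t)) * x ^ (m+1)
            + ∑ j ∈ Finset.range (m+1),
                (Real.exp (-(k * M * t)) *
                  ∫ s in (0:ℝ)..t, c * Real.exp (k * M * s) * cirV a k σ j m s) * x ^ j := by
        rw [Finset.sum_range_succ, hVtop, add_comm]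
        congr 1
        refine Finset.sum_congr rfl fun j hj => ?_
        rw [hVlow j (Finset.mem_range.1 hj)]
      rw [hu, hcongr, hsum, hRHS, mul_add, Finset.mul_sum]
      congr 1
      exact Finset.sum_congr rfl fun j hj => by ring
  · -- diagonal coefficient
    intro m hm t
    cases m with
    | zero => omega
    | succ m' => simp [cirV]
  · -- lower coefficients
    intro m hm j hj t
    cases m with
    | zero => omega
    | succ m' =>
      simp only [cirV, if_neg (Nat.ne_of_lt hj), Nat.succ_sub_one]
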